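/- For the Markov chain (ζ_n, θ_n) on [0,2π) × [0,2π) defined by θ_{n+1} := θ_n + ζ_n/2 + (ν_{n+1}+1)α_{n+1} + ζ_{n+1}/2 (mod 2π), with (ξ_n, α_n) as above, Döblin's condition holds: there exists δ > 0 such that for every measurable A ⊂ [0,2π) × [0,2π) and every state (ζ, θ), P((ζ_{n+1}, θ_{n+1}) ∈ A | (ζ_n, θ_n) = (ζ, θ)) ≥ δ · π̂(A), where π̂ is the product of TRUNCEXP(1, 2π) and UNI[0, 2π). -/

import Mathlib

open MeasureTheory ProbabilityTheory Real Set

/-- TRUNCEXP(1, L): density e^{-x}/(1-e^{-L}) on [0,L]. -/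
noncomputable def truncExpMeasure (L : ℝ) : Measure ℝ :=
  volume.withDensity fun x =>
    ENNReal.ofReal (if x ∈ Icc 0 L then Real.exp (-x) / (1 - Real.exp (-L)) else 0)

/-- The uniform distribution on [0, 2π). -/
noncomputable def uniMeasure : Measure ℝ :=
  (ENNReal.ofReal (2 * π))⁻¹ • volume.restrict (Ico 0 (2 * π))

/-- The scattering-angle distribution: density (1/4)·sin(x/2) on [0, 2π]. -/
noncomputable def sinHalfMeasure : Measure ℝ :=
  volume.withDensity fun x =>
    ENNReal.ofReal (if x ∈ Icc 0 (2 * π) then (1 / 4) * Real.sin (x / 2) else 0)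

/-- Reduction modulo 2π to [0, 2π). -/
noncomputable def mod2pi (x : ℝ) : ℝ := x - 2 * π * ⌊x / (2 * π)⌋

/-!
On the event `ν_{n+1} = 1`, i.e. `ξ ∈ [2π, 4π)`, the new state is `ζ' = ξ - 2π` and
`θ' = c + 2α mod 2π` with `c` depending only on `ζ, θ, ζ'`. The density of `α` is at least `1/8`
on `[π/2, 3π/2]`, an interval that `α ↦ c + 2α mod 2π` wraps exactly once around the circle with
Jacobian `2`, so given `ζ'` the law of `θ'` dominates `(π/8) · UNI[0, 2π)`. On `[2π, 4π)` the
density `e^{-ξ}` equals `e^{-2π}(1 - e^{-2π})` times the `TRUNCEXP(1, 2π)` density of `ξ - 2π`.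
-/
open scoped ENNReal

lemma mod2pi_eq_toIcoMod (x : ℝ) : mod2pi x = toIcoMod two_pi_pos 0 x := by
  simp [mod2pi, toIcoMod, toIcoDiv_eq_floor, mul_comm]

lemma measurable_toIcoMod {p : ℝ} (hp : 0 < p) (a : ℝ) : Measurable (toIcoMod hp a) := by
  have : toIcoMod hp a = fun b => b - ⌊(b - a) / p⌋ • p := by
    funext b
    rw [toIcoMod, toIcoDiv_eq_floor]
  rw [this]
  fun_prop

@[fun_prop]
lemma measurable_mod2pi : Measurable mod2pi := by
  simpa only [← funext mod2pi_eq_toIcoMod] using measurable_toIcoMod two_pi_pos 0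

theorem isAddFundamentalDomain_Ico {p : ℝ} (hp : 0 < p) (t : ℝ) :
    IsAddFundamentalDomain (AddSubgroup.zmultiples p) (Ico t (t + p)) := by
  refine IsAddFundamentalDomain.mk' nullMeasurableSet_Ico fun x => ?_
  have : Function.Bijective (codRestrict (fun n : ℤ => n • p) (AddSubgroup.zmultiples p) _) :=
    (Equiv.ofInjective (fun n : ℤ => n • p) (zsmul_left_strictMono hp).injective).bijective
  refine this.existsUnique_iff.2 ?_
  simpa only [add_comm x] using! existsUnique_add_zsmul_mem_Ico hp x t

/-- Rotation invariance of the uniform measure on the circle `ℝ ⧸ pℤ`, read on a period. -/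
lemma volume_toIcoMod_add_preimage_inter_Ico {p : ℝ} (hp : 0 < p) (c s : ℝ) {T : Set ℝ}
    (hT : MeasurableSet T) :
    volume ({u | toIcoMod hp 0 (c + u) ∈ T} ∩ Ico s (s + p)) = volume (T ∩ Ico 0 p) := by
  have hmeas : MeasurableSet {u | toIcoMod hp 0 (c + u) ∈ T} :=
    hT.preimage ((measurable_toIcoMod hp 0).comp (measurable_const_add c))
  have hperiodic : ∀ g : AddSubgroup.zmultiples p,
      (g +ᵥ ·) ⁻¹' {u | toIcoMod hp 0 (c + u) ∈ T} = {u | toIcoMod hp 0 (c + u) ∈ T} := by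
    rintro ⟨g, hg⟩
    obtain ⟨n, rfl⟩ := AddSubgroup.mem_zmultiples_iff.1 hg
    ext u
    change toIcoMod hp 0 (c + (n • p + u)) ∈ T ↔ toIcoMod hp 0 (c + u) ∈ T
    rw [add_left_comm, toIcoMod_zsmul_add]
  rw [(isAddFundamentalDomain_Ico hp s).measure_set_eq (isAddFundamentalDomain_Ico hp (-c))
    hmeas hperiodic]
  have hshift :
      {u | toIcoMod hp 0 (c + u) ∈ T} ∩ Ico (-c) (-c + p) = (c + ·) ⁻¹' (T ∩ Ico 0 p) := by
    ext u
    have hIco : u ∈ Ico (-c) (-c + p) ↔ c + u ∈ Ico 0 (0 + p) := by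
      simp only [mem_Ico]
      constructor <;> rintro ⟨h₁, h₂⟩ <;> constructor <;> linarith
    rw [mem_inter_iff, mem_ofPred_eq, hIco, mem_preimage, mem_inter_iff, zero_add]
    exact and_congr_left fun hu => by rw [toIcoMod_eq_self hp |>.2 (by rwa [zero_add])]
  rw [hshift, measure_preimage_add]

lemma volume_toIcoMod_add_mul_preimage_inter_Ico {p k : ℝ} (hp : 0 < p) (hk : 0 < k)
    (c s : ℝ) {T : Set ℝ} (hT : MeasurableSet T) :
    volume ({a | toIcoMod hp 0 (c + k * a) ∈ T} ∩ Ico s (s + p / k)) =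
      ENNReal.ofReal k⁻¹ * volume (T ∩ Ico 0 p) := by
  have hscale : {a | toIcoMod hp 0 (c + k * a) ∈ T} ∩ Ico s (s + p / k) =
      (k * ·) ⁻¹' ({u | toIcoMod hp 0 (c + u) ∈ T} ∩ Ico (k * s) (k * s + p)) := by
    rw [preimage_inter, preimage_const_mul_Ico₀ _ _ hk]
    congr 2 <;> field_simp
  rw [hscale, Real.volume_preimage_mul_left hk.ne', abs_of_pos (inv_pos.2 hk),
    volume_toIcoMod_add_preimage_inter_Ico hp _ _ hT]

lemma one_half_le_sin {x : ℝ} (h₁ : π / 4 ≤ x) (h₂ : x ≤ 3 * π / 4) : 1 / 2 ≤ sin x := by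
  rw [← cos_sub_pi_div_two]
  have : (x - π / 2) ^ 2 ≤ 1 := by nlinarith [pi_le_four, pi_pos]
  linarith [one_sub_sq_div_two_le_cos (x := x - π / 2)]

instance : SFinite sinHalfMeasure := by unfold sinHalfMeasure; infer_instance

instance : SFinite uniMeasure := by unfold uniMeasure; infer_instance

lemma smul_restrict_le_sinHalfMeasure :
    ENNReal.ofReal (1 / 8) • volume.restrict (Ico (π / 2) (3 * π / 2)) ≤ sinHalfMeasure := by
  rw [← withDensity_const, ← withDensity_indicator measurableSet_Ico, sinHalfMeasure]
  refine withDensity_mono (ae_of_all _ fun x => ?_)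
  by_cases hx : x ∈ Ico (π / 2) (3 * π / 2)
  · have hx' : x ∈ Icc 0 (2 * π) := ⟨by linarith [hx.1, pi_pos], by linarith [hx.2, pi_pos]⟩
    rw [indicator_of_mem hx]
    dsimp only
    rw [if_pos hx']
    refine ENNReal.ofReal_le_ofReal ?_
    linarith [one_half_le_sin (x := x / 2) (by linarith [hx.1]) (by linarith [hx.2])]
  · rw [indicator_of_notMem hx]
    exact zero_le

lemma uniMeasure_apply (T : Set ℝ) :
    uniMeasure T = ENNReal.ofReal (2 * π)⁻¹ * volume (T ∩ Ico 0 (2 * π)) := by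
  rw [uniMeasure, Measure.smul_apply, Measure.restrict_apply' measurableSet_Ico, smul_eq_mul,
    ENNReal.ofReal_inv_of_pos two_pi_pos]

lemma smul_uniMeasure_le_sinHalfMeasure_preimage (c : ℝ) {T : Set ℝ} (hT : MeasurableSet T) :
    ENNReal.ofReal (π / 8) * uniMeasure T ≤ sinHalfMeasure {a | mod2pi (c + 2 * a) ∈ T} := by
  calc ENNReal.ofReal (π / 8) * uniMeasure T
      = ENNReal.ofReal (1 / 8) * (ENNReal.ofReal 2⁻¹ * volume (T ∩ Ico 0 (2 * π))) := by
        rw [uniMeasure_apply, ← mul_assoc, ← mul_assoc, ← ENNReal.ofReal_mul (by positivity),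
          ← ENNReal.ofReal_mul (by norm_num)]
        congr 2
        field_simp
    _ = (ENNReal.ofReal (1 / 8) • volume.restrict (Ico (π / 2) (3 * π / 2)))
          {a | mod2pi (c + 2 * a) ∈ T} := by
        rw [Measure.smul_apply, Measure.restrict_apply' measurableSet_Ico, smul_eq_mul,
          show 3 * π / 2 = π / 2 + 2 * π / 2 by ring]
        simp only [mod2pi_eq_toIcoMod]
        rw [volume_toIcoMod_add_mul_preimage_inter_Ico two_pi_pos two_pos c _ hT]
    _ ≤ sinHalfMeasure {a | mod2pi (c + 2 * a) ∈ T} := smul_restrict_le_sinHalfMeasure _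

lemma lintegral_truncExpMeasure (L : ℝ) {g : ℝ → ℝ≥0∞} (hg : Measurable g) :
    ∫⁻ y, g y ∂truncExpMeasure L =
      ∫⁻ y in Ico 0 L, ENNReal.ofReal (exp (-y) / (1 - exp (-L))) * g y := by
  have hdensity : Measurable fun x : ℝ =>
      ENNReal.ofReal (if x ∈ Icc 0 L then exp (-x) / (1 - exp (-L)) else 0) :=
    (Measurable.ite measurableSet_Icc (by fun_prop) measurable_const).ennreal_ofReal
  rw [truncExpMeasure, lintegral_withDensity_eq_lintegral_mul _ hdensity hg,
    setLIntegral_congr Ico_ae_eq_Icc, ← lintegral_indicator measurableSet_Icc]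
  congr 1
  funext y
  by_cases hy : y ∈ Icc 0 L
  · rw [indicator_of_mem hy, Pi.mul_apply, if_pos hy]
  · rw [indicator_of_notMem hy, Pi.mul_apply, if_neg hy, ENNReal.ofReal_zero, zero_mul]

lemma setLIntegral_Ici_shift_le_lintegral_expMeasure {L : ℝ} (hL : 0 ≤ L) {g : ℝ → ℝ≥0∞}
    (hg : Measurable g) :
    ∫⁻ y in Ici 0, ENNReal.ofReal (exp (-(y + L))) * g (y + L) ≤ ∫⁻ x, g x ∂expMeasure 1 := by
  have hshift := (measurePreserving_add_right volume L).setLIntegral_comp_preimage_emb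
    (measurableEmbedding_addRight L) (fun x => ENNReal.ofReal (exp (-x)) * g x) (Ici L)
  rw [preimage_add_const_Ici, sub_self] at hshift
  have hdensity : Measurable (exponentialPDF 1) := (measurable_exponentialPDFReal 1).ennreal_ofReal
  rw [hshift, show expMeasure 1 = volume.withDensity (exponentialPDF 1) from rfl,
    lintegral_withDensity_eq_lintegral_mul _ hdensity hg]
  calc ∫⁻ x in Ici L, ENNReal.ofReal (exp (-x)) * g x
      = ∫⁻ x in Ici L, (exponentialPDF 1 * g) x := by
        refine setLIntegral_congr_fun measurableSet_Ici fun x hx => ?_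
        rw [Pi.mul_apply, exponentialPDF_of_nonneg (hL.trans hx), one_mul, one_mul]
    _ ≤ ∫⁻ x, (exponentialPDF 1 * g) x := setLIntegral_le_lintegral _ _

/-- The state `(ζ', θ')` reached from `(ζ, θ)` when `(ξ, α) = q`. -/
noncomputable def nextState (ζ θ : ℝ) (q : ℝ × ℝ) : ℝ × ℝ :=
  (mod2pi q.1, mod2pi (θ + ζ / 2 + ((⌊q.1 / (2 * π)⌋ : ℝ) + 1) * q.2 + mod2pi q.1 / 2))

@[fun_prop]
lemma measurable_nextState (ζ θ : ℝ) : Measurable (nextState ζ θ) := by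
  unfold nextState
  fun_prop

lemma preimage_nextState_slice {ζ θ y : ℝ} (hy : y ∈ Ico 0 (2 * π)) (S : Set (ℝ × ℝ)) :
    Prod.mk (y + 2 * π) ⁻¹' (nextState ζ θ ⁻¹' S) =
      {a | mod2pi (θ + ζ / 2 + y / 2 + 2 * a) ∈ Prod.mk y ⁻¹' S} := by
  have hmod : mod2pi (y + 2 * π) = y := by
    rw [mod2pi_eq_toIcoMod, toIcoMod_add_right, toIcoMod_eq_self, zero_add]
    exact hy
  have hfloor : ⌊(y + 2 * π) / (2 * π)⌋ = 1 := by
    rw [add_div, div_self two_pi_pos.ne', Int.floor_add_one, Int.floor_eq_zero_iff.2, zero_add]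
    exact ⟨div_nonneg hy.1 two_pi_pos.le, (div_lt_one two_pi_pos).2 hy.2⟩
  ext a
  simp only [mem_preimage, mem_ofPred_eq, nextState, hmod, hfloor]
  rw [show θ + ζ / 2 + (((1 : ℤ) : ℝ) + 1) * a + y / 2 = θ + ζ / 2 + y / 2 + 2 * a by
    push_cast; ring]

noncomputable def doeblinConst : ℝ := π * exp (-(2 * π)) * (1 - exp (-(2 * π))) / 8

lemma exp_neg_two_pi_lt_one : exp (-(2 * π)) < 1 := exp_lt_one_iff.2 (by linarith [pi_pos])

lemma doeblinConst_pos : 0 < doeblinConst := by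
  have := sub_pos.2 exp_neg_two_pi_lt_one
  unfold doeblinConst
  positivity

lemma doeblinConst_mul_prod_le_prod_preimage_nextState (ζ θ : ℝ) {S : Set (ℝ × ℝ)}
    (hS : MeasurableSet S) :
    ENNReal.ofReal doeblinConst * ((truncExpMeasure (2 * π)).prod uniMeasure) S ≤
      ((expMeasure 1).prod sinHalfMeasure) (nextState ζ θ ⁻¹' S) := by
  have hslice : Measurable fun x => sinHalfMeasure (Prod.mk x ⁻¹' (nextState ζ θ ⁻¹' S)) :=
    measurable_measure_prodMk_left (measurable_nextState ζ θ hS)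
  rw [Measure.prod_apply hS, Measure.prod_apply (measurable_nextState ζ θ hS),
    lintegral_truncExpMeasure _ (measurable_measure_prodMk_left hS),
    ← lintegral_const_mul' _ _ ENNReal.ofReal_ne_top]
  calc ∫⁻ y in Ico 0 (2 * π), ENNReal.ofReal doeblinConst *
        (ENNReal.ofReal (exp (-y) / (1 - exp (-(2 * π)))) * uniMeasure (Prod.mk y ⁻¹' S))
      = ∫⁻ y in Ico 0 (2 * π), ENNReal.ofReal (exp (-(y + 2 * π))) *
          (ENNReal.ofReal (π / 8) * uniMeasure (Prod.mk y ⁻¹' S)) := by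
        refine lintegral_congr fun y => ?_
        have hgap : 1 - exp (-(2 * π)) ≠ 0 := (sub_pos.2 exp_neg_two_pi_lt_one).ne'
        rw [← mul_assoc, ← mul_assoc, ← ENNReal.ofReal_mul doeblinConst_pos.le,
          ← ENNReal.ofReal_mul (exp_pos _).le, doeblinConst, neg_add, exp_add]
        congr 2
        generalize exp (-(2 * π)) = e at hgap ⊢
        field_simp
    _ ≤ ∫⁻ y in Ico 0 (2 * π), ENNReal.ofReal (exp (-(y + 2 * π))) *
          sinHalfMeasure (Prod.mk (y + 2 * π) ⁻¹' (nextState ζ θ ⁻¹' S)) := by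
        refine setLIntegral_mono' measurableSet_Ico fun y hy => ?_
        rw [preimage_nextState_slice hy]
        gcongr
        exact smul_uniMeasure_le_sinHalfMeasure_preimage _ (measurable_prodMk_left hS)
    _ ≤ ∫⁻ y in Ici 0, ENNReal.ofReal (exp (-(y + 2 * π))) *
          sinHalfMeasure (Prod.mk (y + 2 * π) ⁻¹' (nextState ζ θ ⁻¹' S)) :=
        lintegral_mono_set Ico_subset_Ici_self
    _ ≤ _ := setLIntegral_Ici_shift_le_lintegral_expMeasure two_pi_pos.le hslice

/-- Döblin's condition for the Markov chain (ζ, θ) ↦ (ζ', θ'):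
there is δ > 0 such that for every starting state (ζ, θ) ∈ [0,2π)² and every
measurable A ⊆ [0,2π)², the one-step transition probability into A is at least
δ · (TRUNCEXP(1,2π) ⊗ UNI[0,2π))(A). -/
theorem stmt4
    {Ω : Type*} [MeasureSpace Ω] [IsProbabilityMeasure (ℙ : Measure Ω)]
    (Ξ A : Ω → ℝ) (hΞm : Measurable Ξ) (hAm : Measurable A)
    (hindep : IndepFun Ξ A ℙ)
    (hΞ : Measure.map Ξ ℙ = ProbabilityTheory.expMeasure 1)
    (hA : Measure.map A ℙ = sinHalfMeasure)
    (ν : Ω → ℤ) (hν : ∀ ω, ν ω = ⌊Ξ ω / (2 * π)⌋)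
    (ζ' : Ω → ℝ) (hζ' : ∀ ω, ζ' ω = Ξ ω - 2 * π * (ν ω)) :
    ∃ δ : ℝ, 0 < δ ∧
      ∀ ζ θ : ℝ, ζ ∈ Ico 0 (2 * π) → θ ∈ Ico 0 (2 * π) →
        ∀ S : Set (ℝ × ℝ), MeasurableSet S → S ⊆ (Ico 0 (2 * π)) ×ˢ (Ico 0 (2 * π)) →
          ENNReal.ofReal δ * ((truncExpMeasure (2 * π)).prod uniMeasure) S ≤
            ℙ {ω | (ζ' ω,
              mod2pi (θ + ζ / 2 + ((ν ω : ℝ) + 1) * A ω + ζ' ω / 2)) ∈ S} := by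
  refine ⟨doeblinConst, doeblinConst_pos, fun ζ θ _ _ S hS _ => ?_⟩
  have hlaw : Measure.map (fun ω => (Ξ ω, A ω)) ℙ = (expMeasure 1).prod sinHalfMeasure := by
    rw [← hΞ, ← hA]
    exact (indepFun_iff_map_prod_eq_prod_map_map hΞm.aemeasurable hAm.aemeasurable).1 hindep
  have hevent : {ω | (ζ' ω, mod2pi (θ + ζ / 2 + ((ν ω : ℝ) + 1) * A ω + ζ' ω / 2)) ∈ S} =
      (fun ω => (Ξ ω, A ω)) ⁻¹' (nextState ζ θ ⁻¹' S) := by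
    ext ω
    simp only [mem_ofPred_eq, mem_preimage, nextState, hζ', hν]
    rfl
  rw [hevent, ← Measure.map_apply (hΞm.prodMk hAm) (measurable_nextState ζ θ hS), hlaw]
  exact doeblinConst_mul_prod_le_prod_preimage_nextState ζ θ hS
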